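/- Let H be a finitely generated group, and let G be a group with a surjective group homomorphism φ : G → H whose kernel is contained in the center of G (i.e., G is a central extension of H). Then every term Γₙ(H) with n ≥ 2 of the derived series of H is finitely generated if and only if every term Γₙ(G) with n ≥ 2 of the derived series of G is finitely generated. -/

import Mathlib

/-!
If `K ≤ K₀ ⊔ Z` with `Z` central, then `⁅K, K⁆ = ⁅K₀, K₀⁆`. Lifting finitely many generators of
`φ(K)` therefore replaces `K = Γₙ(G)` by a finitely generated `K₀` with the same image, and lifting
generators of `φ⁅K₀, K₀⁆ = Γₙ₊₁(H)` reduces everything to: if `M` is finitely generated and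
`[M, M] ≤ L ⊔ Z(M)` with `L ≤ [M, M]` finitely generated, then `[M, M]` is finitely generated.
Writing `D = [M, M]`, we have `[D, D] ≤ L`, so it suffices to generate the image of `D ∩ Z(M)`
in `Dᵃᵇ`. That image consists of fixed points of the conjugation action of `Mᵃᵇ` on `Dᵃᵇ`. As a
module over the noetherian ring `ℤ[Mᵃᵇ]`, `Dᵃᵇ` is generated by the commutators of generators of
`M` (P. Hall), so its fixed points form a finitely generated submodule; the group ring acts on it
through `ℤ`, so it is a finitely generated abelian group. The converse holds because `φ` maps
`Γₙ(G)` onto `Γₙ(H)`.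
-/

open Subgroup
open scoped commutatorElement Pointwise

section

variable {G N : Type*} [Group G] [Group N]

theorem commutatorElement_mul_left_of_mem_center {a b z : G} (hz : z ∈ center G) :
    ⁅a * z, b⁆ = ⁅a, b⁆ := by
  rw [commutatorElement_def, commutatorElement_def, mul_assoc a, ← mem_center_iff.mp hz b]
  group

theorem commutatorElement_mul_right_of_mem_center {a b z : G} (hz : z ∈ center G) :
    ⁅a, b * z⁆ = ⁅a, b⁆ := by
  rw [← commutatorElement_inv, commutatorElement_mul_left_of_mem_center hz,
    commutatorElement_inv]

namespace Subgroup

theorem FG.map {P : Subgroup G} (hP : P.FG) (f : G →* N) : (P.map f).FG := by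
  classical
  obtain ⟨S, rfl⟩ := hP
  exact ⟨S.image f, by rw [Finset.coe_image, MonoidHom.map_closure]⟩

theorem exists_fg_le_map_eq {P : Subgroup G} (f : G →* N) (hP : (P.map f).FG) :
    ∃ L ≤ P, L.FG ∧ L.map f = P.map f := by
  classical
  obtain ⟨T, hT⟩ := hP
  have hlift : ∀ t ∈ (T : Set N), ∃ g ∈ P, f g = t := fun t ht =>
    mem_map.mp (hT ▸ subset_closure ht)
  choose! lift hliftP hliftf using hlift
  have hLP : closure (T.image lift : Set G) ≤ P := by
    rw [closure_le, Finset.coe_image]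
    exact Set.image_subset_iff.mpr hliftP
  refine ⟨_, hLP, ⟨_, rfl⟩, le_antisymm (map_mono hLP) ?_⟩
  rw [MonoidHom.map_closure, ← hT, Finset.coe_image, Set.image_image]
  exact closure_mono fun t ht => ⟨t, ht, hliftf t ht⟩

theorem commutator_le_of_le_sup_center {K L : Subgroup G} (h : K ≤ L ⊔ center G) :
    ⁅K, K⁆ ≤ ⁅L, L⁆ := by
  rw [commutator_le]
  intro a ha b hb
  obtain ⟨l, hl, z, hz, rfl⟩ := mem_sup_of_normal_right.mp (h ha)
  obtain ⟨l', hl', z', hz', rfl⟩ := mem_sup_of_normal_right.mp (h hb)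
  rw [commutatorElement_mul_left_of_mem_center hz, commutatorElement_mul_right_of_mem_center hz']
  exact commutator_mem_commutator hl hl'

end Subgroup

theorem commutator_le_normalClosure_of_closure_eq_top {S : Set G} (hS : closure S = ⊤) :
    commutator G ≤ normalClosure (Set.image2 (⁅·, ·⁆) S S) := by
  set q := QuotientGroup.mk' (normalClosure (Set.image2 (⁅·, ·⁆) S S))
  rw [← Normal.quotient_commutative_iff_commutator_le]
  have hcomm : ∀ x ∈ q '' S, ∀ y ∈ q '' S, x * y = y * x := by
    rintro _ ⟨a, ha, rfl⟩ _ ⟨b, hb, rfl⟩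
    rw [← commutatorElement_eq_one_iff_mul_comm, ← map_commutatorElement, QuotientGroup.mk'_apply,
      QuotientGroup.eq_one_iff]
    exact subset_normalClosure (Set.mem_image2_of_mem ha hb)
  have htop : closure (q '' S) = ⊤ := by
    rw [← MonoidHom.map_closure, hS, ← MonoidHom.range_eq_map, MonoidHom.range_eq_top]
    exact QuotientGroup.mk'_surjective _
  have := isMulCommutative_closure hcomm
  exact ⟨⟨fun x y => setLike_mul_comm (s := closure (q '' S))
    (htop ▸ mem_top x) (htop ▸ mem_top y)⟩⟩

theorem Submodule.toAddSubgroup_fg_of_forall_of_smul_eq {Γ V : Type*} [Monoid Γ]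
    [AddCommGroup V] [Module (MonoidAlgebra ℤ Γ) V] {P : Submodule (MonoidAlgebra ℤ Γ) V}
    (hP : P.FG) (htriv : ∀ v ∈ P, ∀ g : Γ, MonoidAlgebra.of ℤ Γ g • v = v) :
    P.toAddSubgroup.FG := by
  obtain ⟨W, hW⟩ := hP
  have smul_mem_zmultiples : ∀ r : MonoidAlgebra ℤ Γ, ∀ v ∈ P,
      r • v ∈ AddSubgroup.zmultiples v := by
    intro r v hv
    induction r using MonoidAlgebra.induction_linear with
    | zero => rw [zero_smul]; exact zero_mem _
    | add r s hr hs => rw [add_smul]; exact add_mem hr hs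
    | single g n =>
      rw [← MonoidAlgebra.smul_of, smul_assoc, htriv v hv g]
      exact AddSubgroup.zsmul_mem_zmultiples v n
  refine ⟨W, le_antisymm ((AddSubgroup.closure_le _).mpr (hW ▸ subset_span)) fun v hv => ?_⟩
  change v ∈ P at hv
  rw [← hW] at hv
  induction hv using span_induction with
  | mem x hx => exact AddSubgroup.subset_closure hx
  | zero => exact zero_mem _
  | add x y _ _ hx hy => exact add_mem hx hy
  | smul r x hxP hx =>
    obtain ⟨n, hn⟩ := AddSubgroup.mem_zmultiples_iff.mp (smul_mem_zmultiples r x (hW ▸ hxP))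
    exact hn ▸ AddSubgroup.zsmul_mem _ hx n

section FixedPoints

variable {Γ A : Type*} [CommGroup Γ] [CommGroup A] [MulDistribMulAction Γ A]

theorem FixedPoints.subgroup_fg_of_closure_iUnion_smul_eq_top [Group.FG Γ] {S : Set A}
    (hS : S.Finite) (hgen : closure (⋃ g : Γ, g • S) = ⊤) :
    (FixedPoints.subgroup Γ A).FG := by
  let ρ := Representation.ofMulDistribMulAction Γ A
  let _ : Module (MonoidAlgebra ℤ Γ) (Additive A) := Module.compHom _ ρ.asAlgebraHom.toRingHom
  have of_smul (g : Γ) (v : Additive A) :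
      MonoidAlgebra.of ℤ Γ g • v = Additive.ofMul (g • v.toMul) :=
    congr($(ρ.asAlgebraHom_of g) v)
  have hspan : Submodule.span (MonoidAlgebra ℤ Γ) (Additive.ofMul '' S) = ⊤ := by
    refine Submodule.eq_top_iff'.mpr fun v => ?_
    suffices ∀ a ∈ closure (⋃ g : Γ, g • S),
        Additive.ofMul a ∈ Submodule.span _ (Additive.ofMul '' S) from
      this v.toMul (hgen ▸ mem_top _)
    intro a ha
    induction ha using closure_induction with
    | mem x hx =>
      obtain ⟨g, s, hs, rfl⟩ : ∃ g : Γ, ∃ s ∈ S, g • s = x := by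
        simpa [Set.mem_smul_set] using hx
      rw [← toMul_ofMul s, ← of_smul]
      exact Submodule.smul_mem _ _ (Submodule.subset_span ⟨s, hs, rfl⟩)
    | one => exact zero_mem _
    | mul x y _ _ hx hy => exact add_mem hx hy
    | inv x _ hx => exact neg_mem hx
  have : Module.Finite (MonoidAlgebra ℤ Γ) (Additive A) :=
    ⟨(hS.image _).toFinset, by rw [Set.Finite.coe_toFinset, hspan]⟩
  have : IsNoetherianRing (MonoidAlgebra ℤ Γ) := Algebra.FiniteType.isNoetherianRing ℤ _
  let F : Submodule (MonoidAlgebra ℤ Γ) (Additive A) :=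
    { carrier := {v | ∀ g : Γ, MonoidAlgebra.of ℤ Γ g • v = v}
      add_mem' := fun ha hb g => by rw [smul_add, ha g, hb g]
      zero_mem' := fun g => smul_zero _
      smul_mem' := fun r v hv g => by rw [← mul_smul, mul_comm, mul_smul, hv g] }
  have hF : F.toAddSubgroup = (FixedPoints.subgroup Γ A).toAddSubgroup := by
    ext v
    change (∀ g, _) ↔ ∀ g : Γ, g • v.toMul = v.toMul
    simp only [of_smul]
    rfl
  rw [fg_iff_add_fg, ← hF]
  exact Submodule.toAddSubgroup_fg_of_forall_of_smul_eq (IsNoetherian.noetherian F)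
    fun v hv => hv

end FixedPoints

def MulEquiv.abelianizationCongrHom : MulAut G →* MulAut (Abelianization G) where
  toFun e := e.abelianizationCongr
  map_one' := abelianizationCongr_refl
  map_mul' e₁ e₂ := (abelianizationCongr_trans e₂ e₁).symm

namespace Abelianization

theorem of_surjective : Function.Surjective (of : G →* Abelianization G) :=
  QuotientGroup.mk_surjective

theorem of_conjNormal_of_mem {K : Subgroup G} [K.Normal] {c : G} (hc : c ∈ K) (k : K) :
    of (MulAut.conjNormal c k) = of k := by
  have : MulAut.conjNormal c k = ⟨c, hc⟩ * k * (⟨c, hc⟩ : K)⁻¹ := Subtype.ext rfl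
  rw [this, map_mul, map_mul, map_inv, mul_inv_cancel_comm]

noncomputable instance : MulDistribMulAction (Abelianization G) (Abelianization (commutator G)) :=
  MulDistribMulAction.compHom _ <|
    QuotientGroup.lift _ (MulEquiv.abelianizationCongrHom.comp MulAut.conjNormal) fun c hc => by
      ext x
      obtain ⟨d, rfl⟩ := of_surjective x
      exact of_conjNormal_of_mem hc d

theorem of_smul_of (g : G) (d : commutator G) : of g • of d = of (MulAut.conjNormal g d) :=
  abelianizationCongr_of _ _

theorem of_mem_fixedPoints_of_mem_center {d : commutator G} (hd : (d : G) ∈ center G) :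
    of d ∈ FixedPoints.subgroup (Abelianization G) (Abelianization (commutator G)) := by
  intro g
  obtain ⟨g, rfl⟩ := of_surjective g
  rw [of_smul_of]
  congr 1
  ext
  rw [MulAut.conjNormal_apply, mem_center_iff.mp hd, mul_inv_cancel_right]

theorem fixedPoints_commutator_fg [hG : Group.FG G] :
    (FixedPoints.subgroup (Abelianization G) (Abelianization (commutator G))).FG := by
  obtain ⟨S, hS, hSfin⟩ := Group.fg_iff.mp hG
  have : Group.FG (Abelianization G) := QuotientGroup.fg _
  set C := Set.image2 (⁅·, ·⁆) S S
  set T : Set (Abelianization (commutator G)) := of '' (Subtype.val ⁻¹' C)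
  have hT : T.Finite := ((hSfin.image2 _ hSfin).preimage Subtype.val_injective.injOn).image _
  refine FixedPoints.subgroup_fg_of_closure_iUnion_smul_eq_top hT ?_
  set X := (closure (⋃ g : Abelianization G, g • T)).comap of
  have hCX : normalClosure C ≤ X.map (commutator G).subtype := by
    rw [normalClosure, closure_le]
    intro y hy
    obtain ⟨a, haC, hconj⟩ := Group.mem_conjugatesOfSet_iff.mp hy
    obtain ⟨c, rfl⟩ := isConj_iff.mp hconj
    have haD : a ∈ commutator G := by
      obtain ⟨s, -, t, -, rfl⟩ := haC
      exact commutator_mem_commutator (mem_top s) (mem_top t)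
    refine ⟨MulAut.conjNormal c ⟨a, haD⟩, subset_closure ?_, rfl⟩
    rw [← of_smul_of]
    exact Set.mem_iUnion.mpr ⟨of c, Set.smul_mem_smul_set ⟨⟨a, haD⟩, haC, rfl⟩⟩
  refine (eq_top_iff' _).mpr fun x => ?_
  obtain ⟨d, rfl⟩ := of_surjective x
  obtain ⟨e, he, hed⟩ := hCX (commutator_le_normalClosure_of_closure_eq_top hS d.2)
  rwa [Subtype.ext hed] at he

end Abelianization

open Abelianization in
theorem commutator_fg_of_le_sup_center [Group.FG G] {L : Subgroup G} (hL : L.FG)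
    (hLD : L ≤ commutator G) (hD : commutator G ≤ L ⊔ center G) : (commutator G).FG := by
  set P := (FixedPoints.subgroup (Abelianization G) (Abelianization (commutator G))).comap of
  have hP : (P.map of).FG := by
    rw [map_comap_eq_self_of_surjective of_surjective]
    exact fixedPoints_commutator_fg
  obtain ⟨W, -, hW, hWP⟩ := exists_fg_le_map_eq of hP
  have hPW := map_le_map_iff.mp hWP.ge
  rw [ker_of] at hPW
  suffices commutator G = L ⊔ W.map (commutator G).subtype by
    rw [this]
    exact hL.sup (hW.map _)
  refine le_antisymm (fun x hx => ?_) (sup_le hLD (map_subtype_le W))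
  obtain ⟨l, hl, z, hz, rfl⟩ := mem_sup_of_normal_right.mp (hD hx)
  have hzD : z ∈ commutator G := by simpa using mul_mem (inv_mem (hLD hl)) hx
  have hzW : z ∈ ⁅commutator G, commutator G⁆ ⊔ W.map (commutator G).subtype := by
    rw [← map_subtype_commutator, ← Subgroup.map_sup, sup_comm]
    exact mem_map_of_mem _ (hPW (of_mem_fixedPoints_of_mem_center (d := ⟨z, hzD⟩) hz))
  have hDD : ⁅commutator G, commutator G⁆ ≤ L :=
    (commutator_le_of_le_sup_center hD).trans L.commutator_le_self
  exact mul_mem (mem_sup_left hl) (sup_le_sup_right hDD _ hzW)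

theorem commutator_fg_of_ker_le_center [Group.FG G] {ψ : G →* N} (hψ : ψ.ker ≤ center G)
    (h : ((commutator G).map ψ).FG) : (commutator G).FG := by
  obtain ⟨L, hLD, hL, hLψ⟩ := exists_fg_le_map_eq ψ h
  exact commutator_fg_of_le_sup_center hL hLD
    ((map_le_map_iff.mp hLψ.ge).trans (sup_le_sup_left hψ L))

theorem Subgroup.commutator_fg_of_map_fg {φ : G →* N} (hφ : φ.ker ≤ center G)
    {K : Subgroup G} (hK : (K.map φ).FG) (hKK : ⁅K.map φ, K.map φ⁆.FG) : ⁅K, K⁆.FG := by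
  obtain ⟨K₀, hK₀K, hK₀, hK₀φ⟩ := exists_fg_le_map_eq φ hK
  have hKK₀ : ⁅K, K⁆ = ⁅K₀, K₀⁆ := le_antisymm
    (commutator_le_of_le_sup_center ((map_le_map_iff.mp hK₀φ.ge).trans (sup_le_sup_left hφ K₀)))
    (commutator_mono hK₀K hK₀K)
  have : Group.FG K₀ := (Group.fg_iff_subgroup_fg K₀).mpr hK₀
  have hcenter : (φ.comp K₀.subtype).ker ≤ center K₀ := fun x hx =>
    mem_center_iff.mpr fun y => Subtype.ext (mem_center_iff.mp (hφ hx) y)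
  have hmap : ((_root_.commutator K₀).map (φ.comp K₀.subtype)).FG := by
    rwa [← map_map, map_subtype_commutator, map_commutator, hK₀φ]
  rw [hKK₀, ← map_subtype_commutator]
  exact (commutator_fg_of_ker_le_center hcenter hmap).map _

end

/-- Let `H` be a finitely generated group and `G` a central extension of `H`. Then every term
`Γₙ(H)` with `n ≥ 2` of the derived series of `H` is finitely generated if and only if every
term `Γₙ(G)` with `n ≥ 2` of the derived series of `G` is finitely generated.
(Here `Γₙ = derivedSeries · (n - 1)`, since Mathlib's derived series starts at index `0`.) -/
theorem derivedSeries_fg_iff_of_central_extension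
    {G H : Type*} [Group G] [Group H] (φ : G →* H)
    (hsurj : Function.Surjective φ) (hker : φ.ker ≤ Subgroup.center G)
    (hH : Group.FG H) :
    (∀ n : ℕ, 2 ≤ n → (derivedSeries H (n - 1)).FG) ↔
      (∀ n : ℕ, 2 ≤ n → (derivedSeries G (n - 1)).FG) := by
  refine ⟨fun hHder n hn => ?_, fun hGder n hn => ?_⟩
  · have hHder' : ∀ k, (derivedSeries H k).FG
      | 0 => Group.fg_def.mp hH
      | k + 1 => by simpa using hHder (k + 2) (by omega)
    obtain ⟨k, rfl⟩ : ∃ k, n = k + 2 := ⟨n - 2, by omega⟩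
    show (derivedSeries G (k + 1)).FG
    rw [derivedSeries_succ]
    refine commutator_fg_of_map_fg hker ?_ ?_
    · rw [map_derivedSeries_eq hsurj]
      exact hHder' k
    · rw [map_derivedSeries_eq hsurj, ← derivedSeries_succ]
      exact hHder' (k + 1)
  · rw [← map_derivedSeries_eq hsurj]
    exact (hGder n hn).map φ
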